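/- Let γ be a nonzero real number and g real. Let L_0, L, X be the ℂ-linear endomorphisms of the space of 3×3 complex matrices given by L_0(ρ) := γ·(E_{02} ρ E_{20} − (1/2)(E_{22} ρ + ρ E_{22})), L(ρ) := −i g·((E_{21}+E_{12}) ρ − ρ (E_{21}+E_{12})), and X(ρ) := −(2 i g/γ)·((E_{12}−E_{21}) ρ + ρ (E_{12}−E_{21}) + 2 E_{01} ρ E_{20} − 2 E_{02} ρ E_{10}). Then L_0∘X − X∘L_0 = L. -/

import Mathlib

attribute [local instance] Matrix.linftyOpNormedAddCommGroup Matrix.linftyOpNormedSpace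

/-- The standard matrix unit `E_{ij}` (a `1` in row `i`, column `j`). -/
noncomputable def matUnit (i j : Fin 3) : Matrix (Fin 3) (Fin 3) ℂ :=
  Matrix.single i j 1

/-! Expanding both compositions pointwise, every product of matrix units collapses by
`E_{ij} E_{kl} = δ_{jk} E_{il}`. The sandwich terms `E₀₁ ρ E₂₀` and `E₀₂ ρ E₁₀` coming from
`L₀ ∘ X` cancel against those coming from `X ∘ L₀`, and so do the cross terms `E₂₂ ρ K`, `K ρ E₂₂`
with `K = E₁₂ - E₂₁`. What survives is the commutator of the anticommutator part of `L₀` with the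
Hamiltonian part of `X`, namely `(γ / 2) · (-2ig / γ) · [E₁₂ + E₂₁, ρ] = L ρ`. -/

lemma matUnit_mul_matUnit (i j k l : Fin 3) :
    matUnit i j * matUnit k l = if j = k then matUnit i l else 0 := by
  split_ifs with h
  · subst h
    simp [matUnit]
  · simp [matUnit, h]

lemma matUnit_mul_matUnit_mul (i j k l : Fin 3) (M : Matrix (Fin 3) (Fin 3) ℂ) :
    matUnit i j * (matUnit k l * M) = if j = k then matUnit i l * M else 0 := by
  rw [← mul_assoc, matUnit_mul_matUnit]
  split_ifs <;> simp

/-- the superoperator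
`X(ρ) = -(2ig/γ)((E_{12}-E_{21})ρ + ρ(E_{12}-E_{21}) + 2 E_{01} ρ E_{20} - 2 E_{02} ρ E_{10})`
solves the commutator equation `[L_0, X] = L` of the three-level model. -/
theorem stmt17 (γ : ℝ) (hγ : γ ≠ 0) (g : ℝ)
    (L₀ L X : Matrix (Fin 3) (Fin 3) ℂ →L[ℂ] Matrix (Fin 3) (Fin 3) ℂ)
    (hL₀ : ∀ ρ, L₀ ρ = (γ : ℂ) •
      (matUnit 0 2 * ρ * matUnit 2 0 -
        (1 / 2 : ℂ) • (matUnit 2 2 * ρ + ρ * matUnit 2 2)))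
    (hL : ∀ ρ, L ρ = (-Complex.I * (g : ℂ)) •
      ((matUnit 2 1 + matUnit 1 2) * ρ - ρ * (matUnit 2 1 + matUnit 1 2)))
    (hX : ∀ ρ, X ρ = (-(2 * Complex.I * (g : ℂ) / (γ : ℂ))) •
      ((matUnit 1 2 - matUnit 2 1) * ρ + ρ * (matUnit 1 2 - matUnit 2 1) +
        2 • (matUnit 0 1 * ρ * matUnit 2 0) - 2 • (matUnit 0 2 * ρ * matUnit 1 0))) :
    L₀ * X - X * L₀ = L := by
  ext1 ρ
  have hγc : (γ : ℂ) * (-(2 * Complex.I * (g : ℂ) / (γ : ℂ))) = -2 * Complex.I * g := by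
    have hγ' : (γ : ℂ) ≠ 0 := by exact_mod_cast hγ
    field_simp
  simp only [sub_apply, mul_apply_eq_comp, hL₀, hL, hX]
  simp only [mul_add, add_mul, mul_sub, sub_mul, mul_smul_comm, smul_mul_assoc, mul_assoc,
    smul_add, smul_sub, smul_smul, matUnit_mul_matUnit, matUnit_mul_matUnit_mul,
    Fin.reduceEq, ↓reduceIte, mul_zero, zero_mul, smul_zero]
  linear_combination (norm := module) hγc •
    ((1 / 2 : ℂ) • (matUnit 1 2 * ρ + matUnit 2 1 * ρ - ρ * matUnit 1 2 - ρ * matUnit 2 1))
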